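/- Let P_1, ..., P_n be orthogonal projections on a finite-dimensional complex inner product space and ψ a unit vector. Then (1/n³) Σ_{i,j,k} ‖P_k P_j P_i ψ‖² ≥ ((1/n) Σ_i ‖P_i ψ‖²)⁵. -/

import Mathlib

/-!
Put `T = ∑ᵢ Pᵢ`, a positive operator. Since each `Pᵢ` is a symmetric idempotent,
`∑ᵢ ‖Pᵢ x‖² = re ⟪x, T x⟫` for every `x`; hence `∑ᵢ ‖Pᵢ ψ‖² = ⟪ψ, T ψ⟫` and
`∑ₖ ‖Pₖ T² ψ‖² = ⟪T² ψ, T³ ψ⟫ = ⟪ψ, T⁵ ψ⟫`. Jensen's inequality for `t ↦ t⁵`, weighted by the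
squared coordinates of `ψ` in an eigenbasis of `T`, gives `⟪ψ, T ψ⟫⁵ ≤ ⟪ψ, T⁵ ψ⟫`, and
Cauchy–Schwarz on the `n²` terms of `Pₖ T² ψ = ∑ᵢⱼ Pₖ Pⱼ Pᵢ ψ` bounds `∑ₖ ‖Pₖ T² ψ‖²` by
`n² ∑ᵢⱼₖ ‖Pₖ Pⱼ Pᵢ ψ‖²`.
-/

open Finset RCLike
open scoped InnerProductSpace

theorem norm_sum_sq_le_card_mul_sum_norm_sq {ι E : Type*} [SeminormedAddCommGroup E]
    (s : Finset ι) (v : ι → E) :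
    ‖∑ i ∈ s, v i‖ ^ 2 ≤ #s * ∑ i ∈ s, ‖v i‖ ^ 2 :=
  (pow_le_pow_left₀ (norm_nonneg _) (norm_sum_le s v) 2).trans sq_sum_le_card_mul_sum_sq

namespace LinearMap

variable {𝕜 E : Type*} [RCLike 𝕜] [NormedAddCommGroup E] [InnerProductSpace 𝕜 E]

theorem IsSymmetric.re_inner_pow_apply_eq_sum [FiniteDimensional 𝕜 E] {T : E →ₗ[𝕜] E}
    (hT : T.IsSymmetric) {N : ℕ} (hN : Module.finrank 𝕜 E = N) (x : E) (k : ℕ) :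
    re ⟪x, (T ^ k) x⟫_𝕜 =
      ∑ i, ‖⟪hT.eigenvectorBasis hN i, x⟫_𝕜‖ ^ 2 * hT.eigenvalues hN i ^ k := by
  set b := hT.eigenvectorBasis hN
  have hpow (i) : (T ^ k) (b i) = ((hT.eigenvalues hN i : 𝕜) ^ k) • b i :=
    (hT.hasEigenvector_eigenvectorBasis hN i).pow_apply k
  rw [← b.sum_inner_mul_inner, map_sum]
  refine sum_congr rfl fun i _ => ?_
  rw [← hT.pow k, hpow, inner_smul_left, ← inner_conj_symm x, map_pow, conj_ofReal, mul_left_comm, RCLike.conj_mul, ← ofReal_pow, ← ofReal_pow,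
    ← ofReal_mul, ofReal_re, mul_comm]

theorem IsPositive.re_inner_apply_pow_le [FiniteDimensional 𝕜 E] {T : E →ₗ[𝕜] E}
    (hT : T.IsPositive) {x : E} (hx : ‖x‖ = 1) (m : ℕ) :
    re ⟪x, T x⟫_𝕜 ^ m ≤ re ⟪x, (T ^ m) x⟫_𝕜 := by
  have hs := hT.isSymmetric.re_inner_pow_apply_eq_sum rfl x
  have hw : ∑ i, ‖⟪hT.isSymmetric.eigenvectorBasis rfl i, x⟫_𝕜‖ ^ 2 = 1 := by
    simpa [hx] using (hs 0).symm
  have h1 := hs 1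
  simp only [pow_one] at h1
  rw [h1, hs]
  exact Real.pow_arith_mean_le_arith_mean_pow _ _ _ (fun i _ => by positivity) hw
    (fun i _ => hT.nonneg_eigenvalues rfl i) m

theorem IsSymmetricProjection.norm_apply_sq {p : E →ₗ[𝕜] E} (hp : p.IsSymmetricProjection)
    (x : E) : ‖p x‖ ^ 2 = re ⟪x, p x⟫_𝕜 := by
  conv_rhs => rw [← hp.isIdempotentElem.eq, Module.End.mul_apply, ← hp.isSymmetric]
  rw [inner_self_eq_norm_sq]

end LinearMap

theorem sum_norm_apply_sq_eq_re_inner_sum_apply {𝕜 E ι : Type*} [RCLike 𝕜] [NormedAddCommGroup E]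
    [InnerProductSpace 𝕜 E] {P : ι → E →ₗ[𝕜] E} (s : Finset ι)
    (hP : ∀ i ∈ s, (P i).IsSymmetricProjection) (x : E) :
    ∑ i ∈ s, ‖P i x‖ ^ 2 = re ⟪x, (∑ i ∈ s, P i) x⟫_𝕜 := by
  simp only [LinearMap.sum_apply, inner_sum, map_sum]
  exact sum_congr rfl fun i hi => (hP i hi).norm_apply_sq x

theorem sum_norm_sq_apply_sum_apply_sum_apply_le {R E ι : Type*} [Semiring R]
    [SeminormedAddCommGroup E] [Module R E] [Fintype ι] (P : ι → E →ₗ[R] E) (x : E) :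
    ∑ k, ‖P k ((∑ j, P j) ((∑ i, P i) x))‖ ^ 2 ≤
      Fintype.card ι ^ 2 * ∑ i, ∑ j, ∑ k, ‖P k (P j (P i x))‖ ^ 2 := by
  have hexpand (k) :
      P k ((∑ j, P j) ((∑ i, P i) x)) = ∑ ij : ι × ι, P k (P ij.2 (P ij.1 x)) := by
    simp only [LinearMap.sum_apply, map_sum, Fintype.sum_prod_type]
  calc ∑ k, ‖P k ((∑ j, P j) ((∑ i, P i) x))‖ ^ 2
      ≤ ∑ k, (Fintype.card ι ^ 2 * ∑ ij : ι × ι, ‖P k (P ij.2 (P ij.1 x))‖ ^ 2) := by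
        refine sum_le_sum fun k _ => ?_
        rw [hexpand]
        refine (norm_sum_sq_le_card_mul_sum_norm_sq _ _).trans_eq ?_
        simp [sq]
    _ = Fintype.card ι ^ 2 * ∑ i, ∑ j, ∑ k, ‖P k (P j (P i x))‖ ^ 2 := by
        rw [← mul_sum, sum_comm]
        simp only [Fintype.sum_prod_type]

theorem projection_rewinding_t3_general
    {E : Type*} [NormedAddCommGroup E] [InnerProductSpace ℂ E] [FiniteDimensional ℂ E]
    {n : ℕ}
    (P : Fin n → (E →ₗ[ℂ] E))
    (hproj : ∀ i, (P i) ∘ₗ (P i) = P i)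
    (hsym : ∀ i, (P i).IsSymmetric)
    (ψ : E) (hψ : ‖ψ‖ = 1) :
    (1 / (n : ℝ) ^ 3) * ∑ i : Fin n, ∑ j : Fin n, ∑ k : Fin n, ‖P k (P j (P i ψ))‖ ^ 2
      ≥ ((1 / (n : ℝ)) * ∑ i, ‖P i ψ‖ ^ 2) ^ 5 := by
  have hP : ∀ i ∈ univ, (P i).IsSymmetricProjection := fun i _ => ⟨hproj i, hsym i⟩
  set T := ∑ i, P i
  have hT : T.IsPositive := LinearMap.isPositive_sum _ fun i hi => (hP i hi).isPositive
  have key : (∑ i, ‖P i ψ‖ ^ 2) ^ 5 ≤ (n : ℝ) ^ 2 * ∑ i, ∑ j, ∑ k, ‖P k (P j (P i ψ))‖ ^ 2 :=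
    calc (∑ i, ‖P i ψ‖ ^ 2) ^ 5 = re ⟪ψ, T ψ⟫_ℂ ^ 5 := by
          rw [sum_norm_apply_sq_eq_re_inner_sum_apply _ hP]
      _ ≤ re ⟪ψ, (T ^ 5) ψ⟫_ℂ := hT.re_inner_apply_pow_le hψ 5
      _ = re ⟪T (T ψ), T (T (T ψ))⟫_ℂ := by
          simp only [pow_succ, pow_zero, one_mul, Module.End.mul_apply, hT.isSymmetric _]
      _ = ∑ k, ‖P k (T (T ψ))‖ ^ 2 := (sum_norm_apply_sq_eq_re_inner_sum_apply _ hP _).symm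
      _ ≤ _ := by
          simpa only [Fintype.card_fin] using sum_norm_sq_apply_sum_apply_sum_apply_le P ψ
  obtain rfl | hn := n.eq_zero_or_pos
  · simp
  calc ((1 / (n : ℝ)) * ∑ i, ‖P i ψ‖ ^ 2) ^ 5 = (∑ i, ‖P i ψ‖ ^ 2) ^ 5 / n ^ 5 := by ring
    _ ≤ (n : ℝ) ^ 2 * (∑ i, ∑ j, ∑ k, ‖P k (P j (P i ψ))‖ ^ 2) / n ^ 5 := by gcongr
    _ = _ := by field_simp

theorem projection_rewinding_t3
    {E : Type*} [NormedAddCommGroup E] [InnerProductSpace ℂ E] [FiniteDimensional ℂ E]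
    {n : ℕ} (hn : 0 < n)
    (P : Fin n → (E →ₗ[ℂ] E))
    (hproj : ∀ i, (P i) ∘ₗ (P i) = P i)
    (hsym : ∀ i, (P i).IsSymmetric)
    (ψ : E) (hψ : ‖ψ‖ = 1) :
    (1 / (n : ℝ) ^ 3) * ∑ i : Fin n, ∑ j : Fin n, ∑ k : Fin n, ‖P k (P j (P i ψ))‖ ^ 2
      ≥ ((1 / (n : ℝ)) * ∑ i, ‖P i ψ‖ ^ 2) ^ 5 :=
  projection_rewinding_t3_general P hproj hsym ψ hψ
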